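/- Let $A_d = 1 - \frac{1}{2d}$. Then $\lim_{d\to\infty} \frac{1}{\log d}\int_1^{\infty} A_d^{x-1} x^{-\frac{d-2}{d-1}}\,dx = 1$. -/

import Mathlib

open Real Filter MeasureTheory

section Aux
open Set

private lemma exp_tail_integral (b D : ℝ) (hb : 0 < b) :
    ∫ x in Set.Ioi D, Real.exp (-b * x) = Real.exp (-b * D) / b := by
  have h : ∀ x ∈ Set.Ici D, HasDerivAt (fun y => -(Real.exp (-b * y) / b)) (Real.exp (-b * x)) x := by
    intro x _
    have h1 : HasDerivAt (fun y : ℝ => -b * y) (-b) x := by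
      simpa using (hasDerivAt_id x).const_mul (-b)
    have h3 : HasDerivAt (fun y => -(Real.exp (-b * y) / b)) (-(Real.exp (-b * x) * -b / b)) x :=
      (h1.exp.div_const b).neg
    convert h3 using 1
    field_simp
  have hint : IntegrableOn (fun x => Real.exp (-b * x)) (Set.Ioi D) :=
    exp_neg_integrableOn_Ioi D hb
  have htend : Tendsto (fun y => -(Real.exp (-b * y) / b)) atTop (nhds 0) := by
    have h2 : Tendsto (fun y : ℝ => Real.exp (-(b * y))) atTop (nhds 0) :=
      Real.tendsto_exp_neg_atTop_nhds_zero.comp (tendsto_id.const_mul_atTop hb)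
    have := (h2.div_const b).neg
    simpa [neg_mul] using this
  have := integral_Ioi_of_hasDerivAt_of_tendsto' h hint htend
  rw [this]
  field_simp
  ring

private lemma aux_contOn (D : ℝ) (hD : 3 ≤ D) (s : Set ℝ) (hs : s ⊆ Set.Ioi 0) :
    ContinuousOn (fun x : ℝ => (1 - 1 / (2 * D)) ^ (x - 1) * x ^ (-((D - 2) / (D - 1)))) s := by
  have hA0 : (0:ℝ) < 1 - 1 / (2 * D) := by
    have : 1 / (2 * D) ≤ 1 / 6 := by
      apply one_div_le_one_div_of_le <;> linarith
    linarith
  have h1 : (fun x : ℝ => (1 - 1 / (2 * D)) ^ (x - 1)) =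
      fun x => Real.exp (Real.log (1 - 1 / (2 * D)) * (x - 1)) :=
    funext fun x => Real.rpow_def_of_pos hA0 _
  apply ContinuousOn.mul
  · rw [h1]
    exact (Real.continuous_exp.comp (continuous_const.mul (continuous_id.sub continuous_const))).continuousOn
  · intro x hx
    exact (Real.continuousAt_rpow_const x _ (Or.inl (ne_of_gt (hs hx)))).continuousWithinAt

private lemma aux_integrable (D : ℝ) (hD : 3 ≤ D) :
    IntegrableOn (fun x : ℝ => (1 - 1 / (2 * D)) ^ (x - 1) * x ^ (-((D - 2) / (D - 1)))) (Set.Ioi 1) := by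
  have hA0 : (0:ℝ) < 1 - 1 / (2 * D) := by
    have : 1 / (2 * D) ≤ 1 / 6 := by
      apply one_div_le_one_div_of_le <;> linarith
    linarith
  have hA1 : 1 - 1 / (2 * D) < 1 := by
    have : 0 < 1 / (2 * D) := by positivity
    linarith
  set b : ℝ := -Real.log (1 - 1 / (2 * D)) with hbdef
  have hb : 0 < b := by
    simp only [hbdef, neg_pos]
    exact Real.log_neg hA0 hA1
  have hg : IntegrableOn (fun x : ℝ => Real.exp b * Real.exp (-b * x)) (Set.Ioi 1) :=
    (exp_neg_integrableOn_Ioi 1 hb).const_mul _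
  apply hg.integrable.mono'
  · exact ((aux_contOn D hD (Set.Ioi 1) (fun x hx => Set.mem_Ioi.mpr (lt_trans one_pos (Set.mem_Ioi.mp hx)))).aestronglyMeasurable measurableSet_Ioi)
  · apply ae_restrict_of_forall_mem measurableSet_Ioi
    intro x hx
    have hx1 : (1:ℝ) < x := hx
    have hf1 : (0:ℝ) ≤ (1 - 1 / (2 * D)) ^ (x - 1) := Real.rpow_nonneg hA0.le _
    have hf2 : (0:ℝ) ≤ x ^ (-((D - 2) / (D - 1))) := Real.rpow_nonneg (by linarith) _
    rw [Real.norm_eq_abs, abs_of_nonneg (mul_nonneg hf1 hf2)]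
    have h2 : x ^ (-((D - 2) / (D - 1))) ≤ 1 := by
      apply Real.rpow_le_one_of_one_le_of_nonpos hx1.le
      rw [neg_nonpos]
      apply div_nonneg <;> linarith
    have h3 : (1 - 1 / (2 * D)) ^ (x - 1) = Real.exp b * Real.exp (-b * x) := by
      rw [Real.rpow_def_of_pos hA0, ← Real.exp_add]
      congr 1
      simp only [hbdef]
      ring
    calc (1 - 1 / (2 * D)) ^ (x - 1) * x ^ (-((D - 2) / (D - 1)))
        ≤ (1 - 1 / (2 * D)) ^ (x - 1) * 1 := by
          exact mul_le_mul_of_nonneg_left h2 hf1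
      _ = Real.exp b * Real.exp (-b * x) := by rw [mul_one, h3]
private lemma aux_lower (D : ℝ) (hD : 3 ≤ D) :
    Real.exp (-(Real.log D)⁻¹) * (Real.log D - Real.log (Real.log D)) ≤
      ∫ x in Set.Ioi (1:ℝ), (1 - 1 / (2 * D)) ^ (x - 1) * x ^ (-((D - 2) / (D - 1))) := by
  have hD0 : (0:ℝ) < D := by linarith
  have hA0 : (0:ℝ) < 1 - 1 / (2 * D) := by
    have : 1 / (2 * D) ≤ 1 / 6 := by apply one_div_le_one_div_of_le <;> linarith
    linarith
  have hA1 : 1 - 1 / (2 * D) < 1 := by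
    have : 0 < 1 / (2 * D) := by positivity
    linarith
  have hexp3 : Real.exp 1 < 3 := lt_trans Real.exp_one_lt_d9 (by norm_num)
  have hlog1 : 1 < Real.log D := by
    rw [Real.lt_log_iff_exp_lt hD0]
    linarith
  have hlogD : Real.log D ≤ D - 1 := Real.log_le_sub_one_of_pos hD0
  set T : ℝ := D / Real.log D with hTdef
  have hT1 : 1 ≤ T := by
    rw [hTdef, le_div_iff₀ (by linarith)]
    linarith
  have hTD : T ≤ D := by
    rw [hTdef, div_le_iff₀ (by linarith)]
    nlinarith
  -- log A ≥ -(1/(2D-1))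
  have hlogA : -(1 / (2 * D - 1)) ≤ Real.log (1 - 1 / (2 * D)) := by
    have h1 : Real.log (1 - 1 / (2 * D))⁻¹ ≤ (1 - 1 / (2 * D))⁻¹ - 1 :=
      Real.log_le_sub_one_of_pos (by positivity)
    rw [Real.log_inv] at h1
    have h2 : (1 - 1 / (2 * D))⁻¹ - 1 = 1 / (2 * D - 1) := by
      have hd1 : (2 * D - 1) ≠ 0 := by linarith
      have hd2 : (2 * D) ≠ 0 := by linarith
      have hd3 : (1 - 1 / (2 * D)) ≠ 0 := by linarith
      field_simp
      ring
    rw [h2] at h1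
    linarith
  -- C ≥ exp(-(log D)⁻¹)
  have hC : Real.exp (-(Real.log D)⁻¹) ≤ (1 - 1 / (2 * D)) ^ (T - 1) := by
    rw [Real.rpow_def_of_pos hA0, Real.exp_le_exp]
    have step1 : -((T - 1) * (1 / (2 * D - 1))) ≤ Real.log (1 - 1 / (2 * D)) * (T - 1) := by
      have := mul_le_mul_of_nonneg_right hlogA (by linarith : (0:ℝ) ≤ T - 1)
      calc -((T - 1) * (1 / (2 * D - 1))) = -(1 / (2 * D - 1)) * (T - 1) := by ring
        _ ≤ Real.log (1 - 1 / (2 * D)) * (T - 1) := this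
    have step2 : (T - 1) * (1 / (2 * D - 1)) ≤ (Real.log D)⁻¹ := by
      have h3 : (T - 1) * (1 / (2 * D - 1)) ≤ T * (1 / D) := by
        have hpos : (0:ℝ) < 2 * D - 1 := by linarith
        apply mul_le_mul (by linarith) _ (by positivity) (by linarith)
        apply one_div_le_one_div_of_le hD0
        linarith
      have h4 : T * (1 / D) = (Real.log D)⁻¹ := by
        rw [hTdef]
        field_simp
      linarith
    linarith
  -- pointwise bound on Ioc 1 T
  set C : ℝ := (1 - 1 / (2 * D)) ^ (T - 1) with hCdef
  have hCpos : 0 < C := Real.rpow_pos_of_pos hA0 _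
  have hpt : ∀ x ∈ Set.Ioc (1:ℝ) T, C * x⁻¹ ≤ (1 - 1 / (2 * D)) ^ (x - 1) * x ^ (-((D - 2) / (D - 1))) := by
    intro x hx
    obtain ⟨hx1, hxT⟩ := hx
    have hb1 : C ≤ (1 - 1 / (2 * D)) ^ (x - 1) :=
      Real.rpow_le_rpow_of_exponent_ge hA0 hA1.le (by linarith)
    have hb2 : x⁻¹ ≤ x ^ (-((D - 2) / (D - 1))) := by
      rw [← Real.rpow_neg_one x]
      apply Real.rpow_le_rpow_of_exponent_le hx1.le
      rw [neg_le_neg_iff, div_le_one (by linarith)]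
      linarith
    exact mul_le_mul hb1 hb2 (by positivity) (Real.rpow_nonneg hA0.le _)
  -- integral of C * x⁻¹ on Ioc 1 T
  have hval : ∫ x in Set.Ioc (1:ℝ) T, C * x⁻¹ = C * (Real.log D - Real.log (Real.log D)) := by
    rw [← intervalIntegral.integral_of_le hT1, intervalIntegral.integral_const_mul,
      integral_inv (by
        rw [Set.uIcc_of_le hT1]
        intro h
        exact absurd h.1 (by norm_num)), div_one]
    rw [hTdef, Real.log_div (by linarith) (by linarith)]
  -- integrability pieces
  have hint : IntegrableOn (fun x : ℝ => (1 - 1 / (2 * D)) ^ (x - 1) * x ^ (-((D - 2) / (D - 1)))) (Set.Ioi 1) :=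
    aux_integrable D hD
  have hint2 : IntegrableOn (fun x : ℝ => C * x⁻¹) (Set.Ioc 1 T) := by
    apply (ContinuousOn.integrableOn_Icc _).mono_set Set.Ioc_subset_Icc_self
    apply continuousOn_const.mul
    apply continuousOn_inv₀.mono
    intro x hx
    simp only [Set.mem_compl_iff, Set.mem_singleton_iff]
    have := hx.1
    intro h; rw [h] at this; norm_num at this
  have hmono1 : ∫ x in Set.Ioc (1:ℝ) T, C * x⁻¹ ≤
      ∫ x in Set.Ioc (1:ℝ) T, (1 - 1 / (2 * D)) ^ (x - 1) * x ^ (-((D - 2) / (D - 1))) :=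
    setIntegral_mono_on hint2 (hint.mono_set Set.Ioc_subset_Ioi_self) measurableSet_Ioc hpt
  have hmono2 : ∫ x in Set.Ioc (1:ℝ) T, (1 - 1 / (2 * D)) ^ (x - 1) * x ^ (-((D - 2) / (D - 1))) ≤
      ∫ x in Set.Ioi (1:ℝ), (1 - 1 / (2 * D)) ^ (x - 1) * x ^ (-((D - 2) / (D - 1))) := by
    apply setIntegral_mono_set hint
    · apply ae_restrict_of_forall_mem measurableSet_Ioi
      intro x hx
      have hx0 : (0:ℝ) ≤ x := le_of_lt (lt_trans one_pos hx)
      exact mul_nonneg (Real.rpow_nonneg hA0.le _) (Real.rpow_nonneg hx0 _)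
    · exact (Set.Ioc_subset_Ioi_self).eventuallyLE
  have hloglog : Real.log (Real.log D) ≤ Real.log D := by
    apply Real.log_le_log (by linarith)
    linarith
  have hfinal : Real.exp (-(Real.log D)⁻¹) * (Real.log D - Real.log (Real.log D)) ≤
      C * (Real.log D - Real.log (Real.log D)) :=
    mul_le_mul_of_nonneg_right hC (by linarith)
  rw [← hval] at hfinal
  linarith
private lemma aux_upper (D : ℝ) (hD : 3 ≤ D) :
    (∫ x in Set.Ioi (1:ℝ), (1 - 1 / (2 * D)) ^ (x - 1) * x ^ (-((D - 2) / (D - 1)))) ≤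
      Real.log D * Real.exp (Real.log D / (D - 1)) + 6 := by
  have hD0 : (0:ℝ) < D := by linarith
  have hA0 : (0:ℝ) < 1 - 1 / (2 * D) := by
    have : 1 / (2 * D) ≤ 1 / 6 := by apply one_div_le_one_div_of_le <;> linarith
    linarith
  have hA1 : 1 - 1 / (2 * D) < 1 := by
    have : 0 < 1 / (2 * D) := by positivity
    linarith
  have hα0 : (0:ℝ) ≤ (D - 2) / (D - 1) := by
    apply div_nonneg <;> linarith
  have hα1 : (D - 2) / (D - 1) < 1 := by
    rw [div_lt_one (by linarith)]; linarith
  have hlogD : Real.log D ≤ D - 1 := Real.log_le_sub_one_of_pos hD0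
  have hlogpos : 0 < Real.log D := Real.log_pos (by linarith)
  have hint : IntegrableOn (fun x : ℝ => (1 - 1 / (2 * D)) ^ (x - 1) * x ^ (-((D - 2) / (D - 1)))) (Set.Ioi 1) :=
    aux_integrable D hD
  -- split
  have hsplit : (∫ x in Set.Ioi (1:ℝ), (1 - 1 / (2 * D)) ^ (x - 1) * x ^ (-((D - 2) / (D - 1)))) =
      (∫ x in Set.Ioc (1:ℝ) D, (1 - 1 / (2 * D)) ^ (x - 1) * x ^ (-((D - 2) / (D - 1)))) +
      (∫ x in Set.Ioi D, (1 - 1 / (2 * D)) ^ (x - 1) * x ^ (-((D - 2) / (D - 1)))) := by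
    rw [← setIntegral_union (Set.Ioc_disjoint_Ioi le_rfl) measurableSet_Ioi
      (hint.mono_set Set.Ioc_subset_Ioi_self)
      (hint.mono_set (Set.Ioi_subset_Ioi (by linarith))),
      Set.Ioc_union_Ioi_eq_Ioi (by linarith : (1:ℝ) ≤ D)]
  -- Part 1
  have hpart1 : (∫ x in Set.Ioc (1:ℝ) D, (1 - 1 / (2 * D)) ^ (x - 1) * x ^ (-((D - 2) / (D - 1)))) ≤
      Real.log D * Real.exp (Real.log D / (D - 1)) := by
    have hintg : IntegrableOn (fun x : ℝ => x ^ (-((D - 2) / (D - 1)))) (Set.Ioc 1 D) := by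
      apply (ContinuousOn.integrableOn_Icc _).mono_set Set.Ioc_subset_Icc_self
      intro x hx
      exact (Real.continuousAt_rpow_const x _ (Or.inl (by have := hx.1; intro h; rw [h] at this; norm_num at this))).continuousWithinAt
    have hmono : (∫ x in Set.Ioc (1:ℝ) D, (1 - 1 / (2 * D)) ^ (x - 1) * x ^ (-((D - 2) / (D - 1)))) ≤
        ∫ x in Set.Ioc (1:ℝ) D, x ^ (-((D - 2) / (D - 1))) := by
      apply setIntegral_mono_on (hint.mono_set Set.Ioc_subset_Ioi_self) hintg measurableSet_Ioc
      intro x hx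
      have h1 : (1 - 1 / (2 * D)) ^ (x - 1) ≤ 1 :=
        Real.rpow_le_one hA0.le hA1.le (by linarith [hx.1])
      have h2 : (0:ℝ) ≤ x ^ (-((D - 2) / (D - 1))) := Real.rpow_nonneg (by linarith [hx.1]) _
      calc (1 - 1 / (2 * D)) ^ (x - 1) * x ^ (-((D - 2) / (D - 1)))
          ≤ 1 * x ^ (-((D - 2) / (D - 1))) := mul_le_mul_of_nonneg_right h1 h2
        _ = x ^ (-((D - 2) / (D - 1))) := one_mul _
    have hval : (∫ x in Set.Ioc (1:ℝ) D, x ^ (-((D - 2) / (D - 1)))) =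
        (D ^ (1/(D-1) : ℝ) - 1) * (D - 1) := by
      rw [← intervalIntegral.integral_of_le (by linarith : (1:ℝ) ≤ D),
        integral_rpow (Or.inl (by linarith))]
      have he : -((D - 2) / (D - 1)) + 1 = 1 / (D - 1) := by
        have hd1 : (D - 1) ≠ 0 := by linarith
        field_simp
        ring
      rw [he, Real.one_rpow, one_div, div_eq_mul_inv, inv_inv]
    have hDpow : D ^ (1/(D-1) : ℝ) = Real.exp (Real.log D / (D - 1)) := by
      rw [Real.rpow_def_of_pos hD0]
      congr 1
      ring
    have hexpkey : (Real.exp (Real.log D / (D - 1)) - 1) * (D - 1) ≤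
        Real.log D * Real.exp (Real.log D / (D - 1)) := by
      set u : ℝ := Real.log D / (D - 1) with hu
      have h1 : Real.exp (-u) = (Real.exp u)⁻¹ := Real.exp_neg u
      have h2 := Real.add_one_le_exp (-u)
      rw [h1] at h2
      have hp := Real.exp_pos u
      have h3 : (-u + 1) * Real.exp u ≤ 1 := by
        have := mul_le_mul_of_nonneg_right h2 hp.le
        rwa [inv_mul_cancel₀ hp.ne'] at this
      have h4 : Real.exp u - 1 ≤ u * Real.exp u := by nlinarith
      have h5 : u * (D - 1) = Real.log D := by
        rw [hu, div_mul_cancel₀ _ (by linarith : (D:ℝ) - 1 ≠ 0)]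
      calc (Real.exp u - 1) * (D - 1) ≤ (u * Real.exp u) * (D - 1) :=
            mul_le_mul_of_nonneg_right h4 (by linarith)
        _ = (u * (D-1)) * Real.exp u := by ring
        _ = Real.log D * Real.exp u := by rw [h5]
    rw [hval, hDpow] at hmono
    linarith
  -- Part 2
  set b : ℝ := 1 / (2 * D) with hbdef
  have hb : 0 < b := by positivity
  have hgint : IntegrableOn (fun x : ℝ => (D ^ (-((D-2)/(D-1))) * Real.exp b) * Real.exp (-b * x)) (Set.Ioi D) :=
    (exp_neg_integrableOn_Ioi D hb).const_mul _
  have hpt2 : ∀ x ∈ Set.Ioi D, (1 - 1 / (2 * D)) ^ (x - 1) * x ^ (-((D - 2) / (D - 1))) ≤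
      (D ^ (-((D-2)/(D-1))) * Real.exp b) * Real.exp (-b * x) := by
    intro x hx
    have hxD : D < x := hx
    have h1 : (1 - 1/(2*D)) ^ (x-1) ≤ Real.exp b * Real.exp (-b*x) := by
      rw [Real.rpow_def_of_pos hA0, ← Real.exp_add, Real.exp_le_exp]
      have hlA : Real.log (1 - 1/(2*D)) ≤ -b := by
        have := Real.log_le_sub_one_of_pos hA0
        rw [hbdef]; linarith [this]
      have hx1 : (0:ℝ) ≤ x - 1 := by linarith
      calc Real.log (1 - 1/(2*D)) * (x-1) ≤ (-b) * (x-1) := mul_le_mul_of_nonneg_right hlA hx1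
        _ = b + -b * x := by ring
    have h2 : x ^ (-((D-2)/(D-1))) ≤ D ^ (-((D-2)/(D-1))) :=
      Real.rpow_le_rpow_of_nonpos hD0 hxD.le (neg_nonpos.mpr hα0)
    calc (1 - 1/(2*D)) ^ (x-1) * x ^ (-((D-2)/(D-1)))
        ≤ (Real.exp b * Real.exp (-b*x)) * (D ^ (-((D-2)/(D-1)))) :=
          mul_le_mul h1 h2 (Real.rpow_nonneg (by linarith) _) (by positivity)
      _ = (D ^ (-((D-2)/(D-1))) * Real.exp b) * Real.exp (-b*x) := by ring
  have hpart2 : (∫ x in Set.Ioi D, (1 - 1/(2*D)) ^ (x-1) * x ^ (-((D-2)/(D-1)))) ≤ 6 := by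
    have hmono2 := setIntegral_mono_on (hint.mono_set (Set.Ioi_subset_Ioi (by linarith))) hgint measurableSet_Ioi hpt2
    have hvq : (∫ x in Set.Ioi D, (D ^ (-((D-2)/(D-1))) * Real.exp b) * Real.exp (-b * x)) =
        (D ^ (-((D-2)/(D-1))) * Real.exp b) * (Real.exp (-b * D) / b) := by
      rw [MeasureTheory.integral_const_mul, exp_tail_integral b D hb]
    have hbD : -b * D = -(1/2 : ℝ) := by
      rw [hbdef]
      have hD' : (D:ℝ) ≠ 0 := by linarith
      field_simp
    have hDa : D ^ (-((D-2)/(D-1))) = Real.exp (Real.log D/(D-1)) * D⁻¹ := by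
      have hd1 : (D:ℝ) - 1 ≠ 0 := by linarith
      have he2 : -((D-2)/(D-1)) = 1/(D-1) + (-1 : ℝ) := by
        field_simp
        ring
      rw [he2, Real.rpow_add hD0, Real.rpow_neg_one]
      congr 1
      rw [Real.rpow_def_of_pos hD0]
      congr 1
      ring
    have hV : (D ^ (-((D-2)/(D-1))) * Real.exp b) * (Real.exp (-b * D) / b) =
        2 * Real.exp (Real.log D/(D-1) + b + (-(1/2 : ℝ))) := by
      rw [hDa, hbD, Real.exp_add, Real.exp_add, hbdef]
      have hD' : (D:ℝ) ≠ 0 := by linarith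
      field_simp
    have harg : Real.log D/(D-1) + b + (-(1/2 : ℝ)) ≤ 1 := by
      have h6 : b ≤ 1/6 := by
        rw [hbdef]
        apply one_div_le_one_div_of_le <;> linarith
      have h7 : Real.log D/(D-1) ≤ 1 := by
        rw [div_le_one (by linarith)]
        exact hlogD
      linarith
    have hexp3 : Real.exp 1 < 3 := lt_trans Real.exp_one_lt_d9 (by norm_num)
    have hle : 2 * Real.exp (Real.log D/(D-1) + b + (-(1/2 : ℝ))) ≤ 2 * Real.exp 1 := by
      have := Real.exp_le_exp.mpr harg
      linarith
    rw [hvq, hV] at hmono2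
    linarith
  rw [hsplit]
  linarith
end Aux

theorem stmt1 :
    Tendsto (fun d : ℕ =>
        (∫ x in Set.Ioi (1 : ℝ),
          ((1 - 1 / (2 * (d : ℝ))) ^ (x - 1)) * x ^ (-(((d : ℝ) - 2) / ((d : ℝ) - 1)))) /
          Real.log d)
      atTop (nhds 1) := by
  have hlog : Tendsto (fun d : ℕ => Real.log d) atTop atTop :=
    Real.tendsto_log_atTop.comp tendsto_natCast_atTop_atTop
  have hlowlim : Tendsto (fun d : ℕ =>
      Real.exp (-(Real.log d)⁻¹) * (1 - Real.log (Real.log d) / Real.log d)) atTop (nhds 1) := by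
    have h1 : Tendsto (fun d : ℕ => Real.exp (-(Real.log d)⁻¹)) atTop (nhds 1) := by
      have h0 : Tendsto (fun d : ℕ => -(Real.log d)⁻¹) atTop (nhds 0) := by
        have := (tendsto_inv_atTop_zero.comp hlog).neg
        simpa using this
      have h2 := (Real.continuous_exp.tendsto 0).comp h0
      simpa [Function.comp_def] using h2
    have h2 : Tendsto (fun d : ℕ => Real.log (Real.log d) / Real.log d) atTop (nhds 0) := by
      have h3 : Tendsto (fun x : ℝ => Real.log x / x) atTop (nhds 0) := by
        have := Real.tendsto_pow_log_div_mul_add_atTop 1 0 1 one_ne_zero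
        simpa using this
      exact h3.comp hlog
    have := h1.mul ((tendsto_const_nhds (x := (1:ℝ))).sub h2)
    simpa using this
  have hupplim : Tendsto (fun d : ℕ =>
      Real.exp (Real.log d / ((d:ℝ) - 1)) + 6 / Real.log d) atTop (nhds 1) := by
    have h1 : Tendsto (fun d : ℕ => Real.exp (Real.log d / ((d:ℝ) - 1))) atTop (nhds 1) := by
      have h3 : Tendsto (fun x : ℝ => Real.log x / (1 * x + -1)) atTop (nhds 0) := by
        have := Real.tendsto_pow_log_div_mul_add_atTop 1 (-1) 1 one_ne_zero
        simpa using this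
      have h4 : Tendsto (fun d : ℕ => Real.log d / ((d:ℝ) - 1)) atTop (nhds 0) := by
        have := h3.comp tendsto_natCast_atTop_atTop
        simpa [sub_eq_add_neg, Function.comp_def] using this
      have h5 := (Real.continuous_exp.tendsto 0).comp h4
      simpa [Function.comp_def] using h5
    have h2 : Tendsto (fun d : ℕ => 6 / Real.log d) atTop (nhds 0) :=
      tendsto_const_nhds.div_atTop hlog
    have := h1.add h2
    simpa using this
  apply tendsto_of_tendsto_of_tendsto_of_le_of_le' hlowlim hupplim
  · filter_upwards [eventually_ge_atTop 3] with d hd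
    have hD : (3:ℝ) ≤ (d:ℝ) := by exact_mod_cast hd
    have hlogpos : 0 < Real.log d := Real.log_pos (by linarith)
    have h := aux_lower (d:ℝ) hD
    have heq : Real.exp (-(Real.log d)⁻¹) * (1 - Real.log (Real.log d) / Real.log d)
        = Real.exp (-(Real.log d)⁻¹) * (Real.log d - Real.log (Real.log d)) / Real.log d := by
      rw [mul_div_assoc, sub_div, div_self hlogpos.ne']
    rw [heq]
    gcongr
  · filter_upwards [eventually_ge_atTop 3] with d hd
    have hD : (3:ℝ) ≤ (d:ℝ) := by exact_mod_cast hd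
    have hlogpos : 0 < Real.log d := Real.log_pos (by linarith)
    have h := aux_upper (d:ℝ) hD
    calc (∫ x in Set.Ioi (1 : ℝ),
          ((1 - 1 / (2 * (d : ℝ))) ^ (x - 1)) * x ^ (-(((d : ℝ) - 2) / ((d : ℝ) - 1)))) / Real.log d
        ≤ (Real.log d * Real.exp (Real.log d / ((d:ℝ) - 1)) + 6) / Real.log d := by gcongr
      _ = Real.exp (Real.log d / ((d:ℝ) - 1)) + 6 / Real.log d := by
          rw [add_div, mul_comm, mul_div_assoc, div_self hlogpos.ne', mul_one]
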